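/- arXiv:2010.06305 — 3 statements merged into one kernel-verified Lean document; each statement's English description precedes it below -/
import Mathlib

section
/- A tuple (X_1,…,X_K) of n×n complex matrices is simultaneously diagonalizable (there exists an invertible S with S⁻¹X_kS diagonal for all k) if and only if there exists an invertible S ∈ ℂ^{n×n} such that the nullspace of Ξ(X_1,…,X_K) contains the range of the Khatri–Rao product S^{-⊤} ⊙ S. -/
open Matrix Kronecker

/-- Column-stacking vectorization: `vecM X (j, i) = X i j`
(the pair `(j, i)` encodes position `(j-1)*n + i`). -/
def vecM {n : ℕ} (X : Matrix (Fin n) (Fin n) ℂ) : Fin n × Fin n → ℂ :=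
  fun p => X p.2 p.1

/-- The Kronecker sum `I_n ⊗ X - Xᵀ ⊗ I_n`. -/
def kronSum {n : ℕ} (X : Matrix (Fin n) (Fin n) ℂ) :
    Matrix (Fin n × Fin n) (Fin n × Fin n) ℂ :=
  (1 : Matrix (Fin n) (Fin n) ℂ) ⊗ₖ X - Xᵀ ⊗ₖ (1 : Matrix (Fin n) (Fin n) ℂ)

/-- `Ξ(X_1, …, X_K)`: the vertical stack of the `I_n ⊗ X_k - X_kᵀ ⊗ I_n`. -/
def XiM {n K : ℕ} (X : Fin K → Matrix (Fin n) (Fin n) ℂ) :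
    Matrix (Fin K × (Fin n × Fin n)) (Fin n × Fin n) ℂ :=
  fun p q => kronSum (X p.1) p.2 q

/-- Simultaneous diagonalizability of a tuple. -/
def SimDiag {n K : ℕ} (X : Fin K → Matrix (Fin n) (Fin n) ℂ) : Prop :=
  ∃ S : Matrix (Fin n) (Fin n) ℂ, IsUnit S ∧ ∀ k, (S⁻¹ * X k * S).IsDiag

/-- `X` has `n` distinct eigenvalues. -/
def HasDistinctEigenvalues {n : ℕ} (X : Matrix (Fin n) (Fin n) ℂ) : Prop :=
  ∃ μ : Fin n → ℂ, Function.Injective μ ∧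
    ∀ i, Module.End.HasEigenvalue (Matrix.mulVecLin X) (μ i)

/-- Squared Frobenius norm. -/
noncomputable def frobSq {m p : Type*} [Fintype m] [Fintype p] (X : Matrix m p ℂ) : ℝ :=
  ∑ i, ∑ j, ‖X i j‖ ^ 2

/-- Khatri–Rao (column-wise Kronecker) product. -/
def khatriRao {n : ℕ} (X Y : Matrix (Fin n) (Fin n) ℂ) :
    Matrix (Fin n × Fin n) (Fin n) ℂ :=
  fun p j => X p.1 j * Y p.2 j

/-!
Put `M = S diag(v) S⁻¹`. Then `(S^{-⊤} ⊙ S) v = vec M`, and `Ξ vec M` stacks the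
`vec (X_k M - M X_k)`, so the condition says that every `X_k` commutes with `S D S⁻¹` for every
diagonal `D`, i.e. that every `S⁻¹ X_k S` commutes with all diagonal matrices. A matrix commuting
with every diagonal matrix unit `E_ii` is itself diagonal.
-/

theorem Units.commute_inv_mul_mul_iff {M : Type*} [Monoid M] (u : Mˣ) (a b : M) :
    Commute (↑u⁻¹ * a * u) b ↔ Commute a (u * b * ↑u⁻¹) := by
  obtain ⟨c, rfl⟩ : ∃ c, b = ↑u⁻¹ * c * u := ⟨u * b * ↑u⁻¹, by simp [mul_assoc]⟩
  simp only [commute_iff_eq, mul_assoc, Units.mul_inv_cancel_left, Units.mul_inv, mul_one,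
    Units.mul_right_inj]
  simp only [← mul_assoc, Units.mul_left_inj]

namespace Matrix

variable {ι α : Type*} [Fintype ι] [DecidableEq ι]

theorem isDiag_iff_forall_commute_diagonal [CommSemiring α] {A : Matrix ι ι α} :
    A.IsDiag ↔ ∀ v, Commute A (diagonal v) := by
  refine ⟨fun hA v => ?_, fun hA i j hij => ?_⟩
  · rw [← (isDiag_iff_diagonal_diag A).mp hA]
    exact commute_diagonal _ _
  · have := (hA (Pi.single i 1)).symm
    rw [diagonal_single] at this
    exact row_eq_zero_of_commute_single this hij.symm

theorem commute_inv_mul_mul_iff [CommRing α] {S : Matrix ι ι α} (hS : IsUnit S)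
    (A B : Matrix ι ι α) : Commute (S⁻¹ * A * S) B ↔ Commute A (S * B * S⁻¹) := by
  obtain ⟨u, rfl⟩ := hS
  rw [← coe_units_inv]
  exact u.commute_inv_mul_mul_iff A B

end Matrix

theorem kronSum_mulVec_vec {n : ℕ} (X M : Matrix (Fin n) (Fin n) ℂ) :
    kronSum X *ᵥ M.vec = (X * M - M * X).vec := by
  rw [kronSum, sub_mulVec, kronecker_mulVec_vec, kronecker_mulVec_vec, transpose_transpose,
    transpose_one, Matrix.mul_one, Matrix.one_mul, vec_sub]

theorem XiM_mulVec_eq_zero_iff {n K : ℕ} (X : Fin K → Matrix (Fin n) (Fin n) ℂ)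
    (w : Fin n × Fin n → ℂ) : XiM X *ᵥ w = 0 ↔ ∀ k, kronSum (X k) *ᵥ w = 0 := by
  simp only [funext_iff, Prod.forall]
  rfl

theorem XiM_mulVec_vec_eq_zero_iff {n K : ℕ} (X : Fin K → Matrix (Fin n) (Fin n) ℂ)
    (M : Matrix (Fin n) (Fin n) ℂ) : XiM X *ᵥ M.vec = 0 ↔ ∀ k, Commute (X k) M := by
  simp only [XiM_mulVec_eq_zero_iff, kronSum_mulVec_vec, vec_eq_zero_iff, sub_eq_zero,
    commute_iff_eq]

theorem khatriRao_transpose_mulVec {n : ℕ} (A B : Matrix (Fin n) (Fin n) ℂ) (v : Fin n → ℂ) :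
    khatriRao Aᵀ B *ᵥ v = (B * diagonal v * A).vec := by
  ext ⟨j, i⟩
  simp only [mulVec, dotProduct, khatriRao, vec, mul_apply (M := B * diagonal v), mul_diagonal,
    transpose_apply]
  exact Finset.sum_congr rfl fun c _ => by ring

theorem simDiag_iff_nullspace_contains_khatriRao_range {n K : ℕ}
    (X : Fin K → Matrix (Fin n) (Fin n) ℂ) :
    SimDiag X ↔ ∃ S : Matrix (Fin n) (Fin n) ℂ, IsUnit S ∧
      ∀ v : Fin n → ℂ, (XiM X).mulVec ((khatriRao (S⁻¹)ᵀ S).mulVec v) = 0 := by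
  simp only [SimDiag, khatriRao_transpose_mulVec, XiM_mulVec_vec_eq_zero_iff]
  refine exists_congr fun S => and_congr_right fun hS => ?_
  simp only [isDiag_iff_forall_commute_diagonal, commute_inv_mul_mul_iff hS]
  exact forall_comm
end

section
/- With Ĥ = Ξ(X⋄) given, the tuple Z = (Z_1,…,Z_K) with Z_k = X⋄_k + (tr(X_k − X⋄_k)/n) I_n minimizes Σ_k ‖X_k − Y_k‖_F² over all (Y_1,…,Y_K) satisfying Ξ(Y_1,…,Y_K) = Ĥ, i.e., Z is the Frobenius-norm projection of (X_1,…,X_K) onto the affine fiber Ξ⁻¹(Ĥ). -/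
open Matrix Kronecker

open ComplexConjugate

/-! The fiber of `Ξ` through `X⋄` consists of the tuples `X⋄_k + c_k I`, because the kernel of
`X ↦ I ⊗ X - Xᵀ ⊗ I` is the scalar matrices (entry `((i₀, i), (i₀, j))` of `I ⊗ A - Aᵀ ⊗ I`
is `A i j - δ_ij A i₀ i₀`). Projecting therefore decouples into `K` problems
`min_c ‖D - c I‖_F²`, and since `D - (tr D / n) I` is trace-free it is orthogonal to `I`, so
`‖D - c I‖_F² = ‖D - (tr D / n) I‖_F² + n |tr D / n - c|²`. -/

section Frobenius

variable {m : Type*} [Fintype m] [DecidableEq m]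

lemma frobSq_add_smul_one (E : Matrix m m ℂ) (a : ℂ) :
    frobSq (E + a • 1) =
      frobSq E + 2 * (trace E * conj a).re + Fintype.card m * ‖a‖ ^ 2 := by
  have entry : ∀ i j, ‖(E + a • 1) i j‖ ^ 2 =
      ‖E i j‖ ^ 2 + if i = j then 2 * (E i i * conj a).re + ‖a‖ ^ 2 else 0 := by
    intro i j
    by_cases hij : i = j
    · subst hij
      simp only [Matrix.add_apply, Matrix.smul_apply, one_apply_eq, smul_eq_mul, mul_one,
        if_true, Complex.sq_norm, Complex.normSq_add]
      ring
    · simp [hij]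
  simp only [frobSq, entry, Finset.sum_add_distrib, Finset.sum_ite_eq, Finset.mem_univ,
    if_true, trace, diag, Finset.sum_mul, Complex.re_sum, Finset.mul_sum, Finset.sum_const,
    Finset.card_univ, nsmul_eq_mul]
  ring

lemma frobSq_sub_smul_one (D : Matrix m m ℂ) (c : ℂ) :
    frobSq (D - c • 1) =
      frobSq (D - (trace D / Fintype.card m) • 1) +
        Fintype.card m * ‖trace D / Fintype.card m - c‖ ^ 2 := by
  have trace_free : trace (D - (trace D / Fintype.card m) • 1) = 0 := by
    rcases isEmpty_or_nonempty m with _ | _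
    · simp [trace]
    · rw [trace_sub, trace_smul, trace_one, smul_eq_mul,
        div_mul_cancel₀ _ (Nat.cast_ne_zero.mpr Fintype.card_ne_zero), sub_self]
  calc frobSq (D - c • 1)
      = frobSq ((D - (trace D / Fintype.card m) • 1) + (trace D / Fintype.card m - c) • 1) := by
        congr 1; module
    _ = _ := by rw [frobSq_add_smul_one, trace_free, zero_mul, Complex.zero_re, mul_zero, add_zero]

lemma frobSq_sub_trace_div_card_smul_one_le (D : Matrix m m ℂ) (c : ℂ) :
    frobSq (D - (trace D / Fintype.card m) • 1) ≤ frobSq (D - c • 1) := by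
  rw [frobSq_sub_smul_one D c]
  exact le_add_of_nonneg_right (by positivity)

end Frobenius

section KroneckerSum

variable {n : ℕ}

lemma kronSum_sub (A B : Matrix (Fin n) (Fin n) ℂ) :
    kronSum (A - B) = kronSum A - kronSum B := by
  ext p q
  simp only [kronSum, Matrix.sub_apply, kroneckerMap_apply, transpose_apply]
  ring

lemma kronSum_eq_zero_iff (A : Matrix (Fin n) (Fin n) ℂ) :
    kronSum A = 0 ↔ ∃ c : ℂ, A = c • 1 := by
  constructor
  · intro h
    rcases isEmpty_or_nonempty (Fin n) with _ | ⟨⟨i₀⟩⟩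
    · exact ⟨0, Subsingleton.elim _ _⟩
    refine ⟨A i₀ i₀, ext fun i j => ?_⟩
    have entry := congrFun (congrFun h (i₀, i)) (i₀, j)
    by_cases hij : i = j
    · subst hij
      simpa [kronSum, sub_eq_zero] using entry
    · simpa [kronSum, hij] using entry
  · rintro ⟨c, rfl⟩
    rw [kronSum, transpose_smul, transpose_one, kronecker_smul, smul_kronecker, sub_self]

lemma XiM_eq_XiM_iff {K : ℕ} (Y X : Fin K → Matrix (Fin n) (Fin n) ℂ) :
    XiM Y = XiM X ↔ ∀ k, ∃ c : ℂ, Y k = X k + c • 1 := by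
  have kronSum_eq : XiM Y = XiM X ↔ ∀ k, kronSum (Y k) = kronSum (X k) :=
    ⟨fun h k => ext fun p q => congrFun (congrFun h (k, p)) q,
      fun h => funext fun p => funext fun q => by simp only [XiM, h]⟩
  simp only [kronSum_eq, ← sub_eq_zero (a := kronSum (Y _)), ← kronSum_sub,
    kronSum_eq_zero_iff, sub_eq_iff_eq_add']

end KroneckerSum

theorem projection_onto_Xi_fiber_general {n K : ℕ}
    (Xd X Z : Fin K → Matrix (Fin n) (Fin n) ℂ)
    (hZ : ∀ k, Z k = Xd k + ((Matrix.trace (X k - Xd k)) / (n : ℂ)) •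
      (1 : Matrix (Fin n) (Fin n) ℂ)) :
    XiM Z = XiM Xd ∧
      ∀ Y : Fin K → Matrix (Fin n) (Fin n) ℂ, XiM Y = XiM Xd →
        ∑ k, frobSq (X k - Z k) ≤ ∑ k, frobSq (X k - Y k) := by
  refine ⟨(XiM_eq_XiM_iff Z Xd).mpr fun k => ⟨_, hZ k⟩, fun Y hY => ?_⟩
  refine Finset.sum_le_sum fun k _ => ?_
  obtain ⟨c, hc⟩ := (XiM_eq_XiM_iff Y Xd).mp hY k
  have hle := frobSq_sub_trace_div_card_smul_one_le (X k - Xd k) c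
  rw [Fintype.card_fin] at hle
  rwa [hZ k, hc, sub_add_eq_sub_sub, sub_add_eq_sub_sub]

theorem projection_onto_Xi_fiber {n K : ℕ} (hn : 0 < n)
    (Xd X Z : Fin K → Matrix (Fin n) (Fin n) ℂ)
    (hZ : ∀ k, Z k = Xd k + ((Matrix.trace (X k - Xd k)) / (n : ℂ)) •
      (1 : Matrix (Fin n) (Fin n) ℂ)) :
    XiM Z = XiM Xd ∧
      ∀ Y : Fin K → Matrix (Fin n) (Fin n) ℂ, XiM Y = XiM Xd →
        ∑ k, frobSq (X k - Z k) ≤ ∑ k, frobSq (X k - Y k) :=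
  projection_onto_Xi_fiber_general Xd X Z hZ
end

section
/- Suppose (X_1,…,X_K) are n×n complex matrices, simultaneously diagonalized by invertible S as Λ_k = S⁻¹X_kS = diag(λ_1^{(k)},…,λ_n^{(k)}). Then rank(Ξ(X_1,…,X_K)) = rank(Ξ(Λ_1,…,Λ_K)), and rank(Ξ(X_1,…,X_K)) = n² − n if and only if for every p ≠ q the vectors (λ_p^{(1)},…,λ_p^{(K)}) and (λ_q^{(1)},…,λ_q^{(K)}) differ. -/
/-!
Conjugating every `X_k` by `S` multiplies each block `I ⊗ X_k - X_kᵀ ⊗ I` of `Ξ` on the left by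
`Sᵀ ⊗ S⁻¹` and on the right by `(S⁻¹)ᵀ ⊗ S`; both are invertible, so the rank of `Ξ` is unchanged.
For diagonal `Λ_k` each block is diagonal with entry `λ_q^{(k)} - λ_p^{(k)}` at `(p, q)`, so `Ξᴴ Ξ`
is diagonal and the rank counts the pairs `(p, q)` whose eigenvalue vectors differ. These pairs lie
off the diagonal, and there are `n² - n` of them exactly when all `n` vectors are distinct.
-/

open Matrix Kronecker

open Finset

theorem Finset.card_filter_apply_ne_eq_iff_injective {α β : Type*} [Fintype α] [DecidableEq α]
    [DecidableEq β] (v : α → β) :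
    #{q : α × α | v q.1 ≠ v q.2} = Fintype.card α ^ 2 - Fintype.card α ↔ v.Injective := by
  have hsub : ({q : α × α | v q.1 ≠ v q.2} : Finset (α × α)) ⊆ univ.offDiag := by
    intro q hq
    simp only [mem_filter, mem_offDiag, mem_univ, true_and] at hq ⊢
    exact fun h => hq (congrArg v h)
  rw [← card_univ, sq, ← offDiag_card]
  constructor
  · intro hcard p q hvpq
    by_contra hpq
    have hmem : (p, q) ∈ ({q : α × α | v q.1 ≠ v q.2} : Finset _) := by
      rw [eq_of_subset_of_card_le hsub hcard.ge]
      simpa using hpq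
    exact (mem_filter.mp hmem).2 hvpq
  · intro hv
    congr 1
    ext q
    simp [hv.ne_iff]

namespace Matrix

variable {ι m n R : Type*}

def blockStack (B : ι → Matrix m n R) : Matrix (ι × m) n R :=
  of fun p q => B p.1 p.2 q

theorem one_kronecker_mul_blockStack [Fintype ι] [Fintype m] [DecidableEq ι] [CommSemiring R]
    (P : Matrix m m R) (B : ι → Matrix m n R) :
    ((1 : Matrix ι ι R) ⊗ₖ P) * blockStack B = blockStack fun k => P * B k := by
  ext ⟨k, r⟩ q
  simp [blockStack, mul_apply, Fintype.sum_prod_type, one_apply, ite_mul]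

theorem blockStack_mul [Fintype n] [Semiring R] {n' : Type*} (B : ι → Matrix m n R)
    (Q : Matrix n n' R) : blockStack B * Q = blockStack fun k => B k * Q := by
  ext ⟨k, r⟩ q
  simp [blockStack, mul_apply]

theorem rank_blockStack_mul_mul [Fintype ι] [Fintype m] [Fintype n] [DecidableEq ι]
    [DecidableEq m] [DecidableEq n] [CommRing R] (P : Matrix m m R) (Q : Matrix n n R) (hP : IsUnit P.det) (hQ : IsUnit Q.det)
    (B : ι → Matrix m n R) :
    (blockStack fun k => P * B k * Q).rank = (blockStack B).rank := by
  have hIP : IsUnit ((1 : Matrix ι ι R) ⊗ₖ P).det := by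
    rw [det_kronecker, det_one, one_pow, one_mul]
    exact hP.pow _
  rw [← blockStack_mul (fun k => P * B k), ← one_kronecker_mul_blockStack,
    rank_mul_eq_left_of_isUnit_det _ _ hQ, rank_mul_eq_right_of_isUnit_det _ _ hIP]

theorem conjTranspose_blockStack_mul_blockStack [Fintype ι] [Fintype m] [Semiring R]
    [StarRing R] {n' : Type*} (B : ι → Matrix m n R) (C : ι → Matrix m n' R) :
    (blockStack B)ᴴ * blockStack C = ∑ k, (B k)ᴴ * C k := by
  ext i j
  simp [blockStack, mul_apply, Fintype.sum_prod_type, sum_apply]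

theorem rank_blockStack_diagonal [Fintype ι] [Fintype n] [DecidableEq n] [Field R]
    [DecidableEq R] [PartialOrder R] [StarRing R] [StarOrderedRing R] (d : ι → n → R) :
    (blockStack fun k => diagonal (d k)).rank = #{q | ∃ k, d k q ≠ 0} := by
  have hgram : (blockStack fun k => diagonal (d k))ᴴ * blockStack (fun k => diagonal (d k))
      = diagonal fun q => ∑ k, star (d k q) * d k q := by
    rw [conjTranspose_blockStack_mul_blockStack]
    ext i j
    by_cases h : i = j <;> simp [sum_apply, h]
  rw [← rank_conjTranspose_mul_self, hgram, rank_diagonal, Fintype.card_subtype]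
  congr! 2 with q
  rw [Ne, sum_eq_zero_iff_of_nonneg fun k _ => star_mul_self_nonneg (d k q)]
  simp

end Matrix

lemma XiM_eq_blockStack {n K : ℕ} (X : Fin K → Matrix (Fin n) (Fin n) ℂ) :
    XiM X = blockStack fun k => kronSum (X k) :=
  rfl

lemma kronSum_diagonal {n : ℕ} (d : Fin n → ℂ) :
    kronSum (diagonal d) = diagonal fun q => d q.2 - d q.1 := by
  ext ⟨a, b⟩ ⟨c, e⟩
  by_cases hac : a = c <;> by_cases hbe : b = e <;>
    simp [kronSum, kroneckerMap_apply, hac, hbe]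

lemma kronSum_nonsing_inv_mul_mul {n : ℕ} (S X : Matrix (Fin n) (Fin n) ℂ) (hS : IsUnit S.det) :
    kronSum (S⁻¹ * X * S) = (Sᵀ ⊗ₖ S⁻¹) * kronSum X * ((S⁻¹)ᵀ ⊗ₖ S) := by
  have hSS : S⁻¹ * S = 1 := nonsing_inv_mul S hS
  simp only [kronSum, mul_sub, sub_mul, ← mul_kronecker_mul, mul_one,
    ← transpose_mul, hSS, transpose_one, mul_assoc]

lemma rank_XiM_nonsing_inv_mul_mul {n K : ℕ} (X : Fin K → Matrix (Fin n) (Fin n) ℂ)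
    (S : Matrix (Fin n) (Fin n) ℂ) (hS : IsUnit S.det) :
    (XiM fun k => S⁻¹ * X k * S).rank = (XiM X).rank := by
  have hSinv : IsUnit S⁻¹.det := isUnit_nonsing_inv_det S hS
  simp_rw [XiM_eq_blockStack, kronSum_nonsing_inv_mul_mul S _ hS]
  refine rank_blockStack_mul_mul _ _ ?_ ?_ _ <;>
    simp only [det_kronecker, det_transpose, Fintype.card_fin]
  exacts [(hS.pow n).mul (hSinv.pow n), (hSinv.pow n).mul (hS.pow n)]

open ComplexOrder in
lemma rank_XiM_diagonal {n K : ℕ} (lam : Fin K → Fin n → ℂ) :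
    (XiM fun k => diagonal (lam k)).rank =
      #{q : Fin n × Fin n | (fun k => lam k q.1) ≠ fun k => lam k q.2} := by
  simp_rw [XiM_eq_blockStack, kronSum_diagonal, rank_blockStack_diagonal]
  congr 1
  ext q
  simp [sub_eq_zero, funext_iff, eq_comm]

theorem rank_Xi_of_simultaneous_diagonalization {n K : ℕ}
    (X : Fin K → Matrix (Fin n) (Fin n) ℂ)
    (S : Matrix (Fin n) (Fin n) ℂ) (hS : IsUnit S)
    (lam : Fin K → Fin n → ℂ)
    (hdiag : ∀ k, S⁻¹ * X k * S = Matrix.diagonal (lam k)) :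
    (XiM X).rank = (XiM (fun k => Matrix.diagonal (lam k))).rank ∧
      ((XiM X).rank = n ^ 2 - n ↔
        ∀ p q : Fin n, p ≠ q → (fun k => lam k p) ≠ (fun k => lam k q)) := by
  have hrank : (XiM X).rank = (XiM fun k => diagonal (lam k)).rank := by
    simp_rw [← hdiag, rank_XiM_nonsing_inv_mul_mul X S ((isUnit_iff_isUnit_det S).mp hS)]
  refine ⟨hrank, ?_⟩
  rw [hrank, rank_XiM_diagonal]
  have hcount := card_filter_apply_ne_eq_iff_injective fun p k => lam k p
  rw [Fintype.card_fin] at hcount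
  exact hcount.trans Function.injective_iff_pairwise_ne
end
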